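/- For every n ≥ 0, η-almost everywhere one has E_η[u_{n+1} | F_n] = ((n+1)/(n+2)) · u_n. -/

import Mathlib

/-! `u (n+1) = u n - 1` when `x n ≤ k_n` and `u n + 1` otherwise. Given the first `n` coordinates,
`x n` is uniform on `Fin (n+2)`, so the first case has conditional probability `(k_n+1)/(n+2)` and
`E[u (n+1) | F_n] = u n + 1 - 2 (k_n+1)/(n+2) = (n+1)/(n+2) · u n`. As `F_n` is generated by the
finitely many cylinders of length `n`, it suffices to compare integrals over one cylinder, which
splits into `n+2` subcylinders of equal mass. -/

open MeasureTheory Filter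
open scoped ENNReal

/-- The Euler path space: a point is an infinite edge path in the Euler graph,
`x n : Fin (n+2)` being the label of the edge chosen from level `n` to level `n+1`. -/
abbrev EulerPath : Type := ∀ n : ℕ, Fin (n + 2)

/-- Vertex labels: `kv x n` is the `k` with the path `x` passing through vertex `(n,k)`.
A label `(x n : ℕ) ≤ kv x n` is a left turn (edge to `(n+1, kv x n)`), a larger label
is a right turn (edge to `(n+1, kv x n + 1)`). -/
def kv (x : EulerPath) : ℕ → ℕ
  | 0 => 0
  | n + 1 => if (x n : ℕ) ≤ kv x n then kv x n else kv x n + 1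

/-- The symmetric measure: the product over `n` of the uniform probability measures on
`Fin (n+2)`, characterized as the probability measure giving each cylinder of length `n`
the measure `∏_{i<n} 1/(i+2)`. -/
def IsSymmetricMeasure (η : Measure EulerPath) : Prop :=
  IsProbabilityMeasure η ∧
    ∀ (n : ℕ) (c : EulerPath),
      η {x | ∀ i < n, x i = c i} = ∏ i ∈ Finset.range n, ((i : ℝ≥0∞) + 2)⁻¹

/-- `u_n = 2 k_n - n` (an integer, viewed in `ℝ`). -/
def u (n : ℕ) (x : EulerPath) : ℝ :=
  ((2 * (kv x n : ℤ) - (n : ℤ) : ℤ) : ℝ)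

/-- `F_n`: the σ-algebra on `X` generated by the coordinates `x_0, …, x_{n-1}`. -/
def coordAlg (n : ℕ) : MeasurableSpace EulerPath :=
  ⨆ i : Fin n, MeasurableSpace.comap (fun x => x i) inferInstance

/-- The filtration `(F_n)` on `X`. -/
def coordFil : Filtration ℕ (inferInstance : MeasurableSpace EulerPath) where
  seq := coordAlg
  mono' := by
    intro i j hij
    exact iSup_le fun v => le_iSup_of_le (⟨v.1, lt_of_lt_of_le v.2 hij⟩ : Fin j) le_rfl
  le' := fun i => iSup_le fun v => Measurable.comap_le (measurable_pi_apply _)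

section FiberCondExp

variable {Ω β : Type*} [MeasurableSpace Ω] [MeasurableSpace β] [MeasurableSingletonClass β]
  [Countable β] {μ : Measure Ω} {p : Ω → β}

theorem setIntegral_preimage_eq_tsum_fiber (hp : Measurable p) {f : Ω → ℝ}
    (hf : Integrable f μ) (t : Set β) :
    ∫ x in p ⁻¹' t, f x ∂μ = ∑' b : t, ∫ x in p ⁻¹' {(b : β)}, f x ∂μ := by
  have hunion : p ⁻¹' t = ⋃ b : t, p ⁻¹' {(b : β)} := by
    ext x; simp
  rw [hunion, integral_iUnion (fun b => hp (measurableSet_singleton _))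
    (fun b b' hne => Disjoint.preimage _ (Set.disjoint_singleton.mpr (Subtype.coe_ne_coe.mpr hne)))
    hf.integrableOn]

theorem condExp_comap_ae_eq_of_setIntegral_fiber_eq [IsFiniteMeasure μ] (hp : Measurable p)
    {f g : Ω → ℝ} (hf : Integrable f μ) (hg : Integrable g μ)
    (hgm : StronglyMeasurable[MeasurableSpace.comap p inferInstance] g)
    (hfiber : ∀ ω, ∫ x in p ⁻¹' {p ω}, g x ∂μ = ∫ x in p ⁻¹' {p ω}, f x ∂μ) :
    μ[f | MeasurableSpace.comap p inferInstance] =ᵐ[μ] g := by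
  refine (ae_eq_condExp_of_forall_setIntegral_eq hp.comap_le hf (fun _ _ _ => hg.integrableOn)
    ?_ hgm.aestronglyMeasurable).symm
  rintro _ ⟨t, -, rfl⟩ -
  rw [setIntegral_preimage_eq_tsum_fiber hp hg, setIntegral_preimage_eq_tsum_fiber hp hf]
  congr 1
  ext ⟨b, -⟩
  by_cases hb : b ∈ Set.range p
  · obtain ⟨ω, rfl⟩ := hb
    exact hfiber ω
  · have hempty : p ⁻¹' {b} = ∅ := by
      ext x; simpa using fun h => hb ⟨x, h⟩
    simp [hempty]

end FiberCondExp

abbrev PathPrefix (n : ℕ) : Type := ∀ i : Fin n, Fin ((i : ℕ) + 2)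

def prefixProj (n : ℕ) (x : EulerPath) : PathPrefix n := fun i => x i

def pathCylinder (n : ℕ) (c : EulerPath) : Set EulerPath := {x | ∀ i < n, x i = c i}

theorem prefixProj_eq_iff {n : ℕ} {x y : EulerPath} :
    prefixProj n x = prefixProj n y ↔ ∀ i < n, x i = y i :=
  ⟨fun h i hi => congrFun h ⟨i, hi⟩, fun h => funext fun i => h i i.isLt⟩

theorem preimage_prefixProj_singleton (n : ℕ) (c : EulerPath) :
    prefixProj n ⁻¹' {prefixProj n c} = pathCylinder n c := by
  ext x
  exact prefixProj_eq_iff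

theorem measurable_prefixProj (n : ℕ) : Measurable (prefixProj n) :=
  measurable_pi_lambda _ fun i => measurable_pi_apply (i : ℕ)

theorem coordAlg_eq_comap_prefixProj (n : ℕ) :
    coordAlg n = MeasurableSpace.comap (prefixProj n) inferInstance := by
  rw [coordAlg, MeasurableSpace.pi, MeasurableSpace.comap_iSup]
  simp only [MeasurableSpace.comap_comp]
  rfl

theorem measurable_of_prefix {α : Type*} [MeasurableSpace α] {n : ℕ} {f : EulerPath → α}
    (hf : ∀ x y, (∀ i < n, x i = y i) → f x = f y) : Measurable[coordAlg n] f := by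
  have hfactor : Function.FactorsThrough f (prefixProj n) :=
    fun x y hxy => hf x y (prefixProj_eq_iff.mp hxy)
  rw [← hfactor.extend_comp (fun _ => f 0), coordAlg_eq_comap_prefixProj]
  exact (measurable_of_countable _).comp (comap_measurable _)

theorem measurableSet_pathCylinder (n : ℕ) (c : EulerPath) :
    MeasurableSet (pathCylinder n c) := by
  rw [← preimage_prefixProj_singleton]
  exact measurable_prefixProj n (measurableSet_singleton _)

theorem kv_congr {n : ℕ} {x y : EulerPath} (h : ∀ i < n, x i = y i) : kv x n = kv y n := by
  induction n with
  | zero => rfl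
  | succ m ih =>
    simp only [kv, ih fun i hi => h i (by omega), h m (by omega)]

theorem kv_le (x : EulerPath) (n : ℕ) : kv x n ≤ n := by
  induction n with
  | zero => rfl
  | succ m ih =>
    simp only [kv]
    split <;> omega

theorem u_congr {n : ℕ} {x y : EulerPath} (h : ∀ i < n, x i = y i) : u n x = u n y := by
  rw [u, u, kv_congr h]

theorem u_succ (n : ℕ) (x : EulerPath) :
    u (n + 1) x = u n x + if (x n : ℕ) ≤ kv x n then -1 else 1 := by
  simp only [u, kv]
  split <;> push_cast <;> ring

theorem abs_u_le (n : ℕ) (x : EulerPath) : |u n x| ≤ n := by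
  have hk : (kv x n : ℝ) ≤ n := by exact_mod_cast kv_le x n
  rw [u, abs_le]
  push_cast
  constructor <;> linarith [(kv x n).cast_nonneg (α := ℝ)]

theorem measurable_u (n : ℕ) : Measurable[coordAlg n] (u n) :=
  measurable_of_prefix fun _ _ => u_congr

theorem integrable_u (η : Measure EulerPath) [IsFiniteMeasure η] (n : ℕ) :
    Integrable (u n) η :=
  .of_bound ((measurable_u n).mono (coordFil.le n) le_rfl).aestronglyMeasurable n
    (.of_forall fun x => (Real.norm_eq_abs _).trans_le (abs_u_le n x))

theorem measureReal_pathCylinder_succ {η : Measure EulerPath} (hη : IsSymmetricMeasure η)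
    (n : ℕ) (c : EulerPath) :
    η.real (pathCylinder (n + 1) c) = η.real (pathCylinder n c) * ((n : ℝ) + 2)⁻¹ := by
  simp only [measureReal_def, pathCylinder, hη.2, Finset.prod_range_succ, ENNReal.toReal_mul,
    ENNReal.toReal_inv]
  simp [ENNReal.toReal_add]

theorem pathCylinder_congr {n : ℕ} {c c' : EulerPath} (h : ∀ i < n, c i = c' i) :
    pathCylinder n c = pathCylinder n c' := by
  ext x
  exact forall₂_congr fun i hi => by rw [h i hi]

theorem setIntegral_pathCylinder_of_prefix (μ : Measure EulerPath) {n : ℕ}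
    {f : EulerPath → ℝ} (hf : ∀ x y, (∀ i < n, x i = y i) → f x = f y) (c : EulerPath) :
    ∫ x in pathCylinder n c, f x ∂μ = μ.real (pathCylinder n c) * f c := by
  rw [setIntegral_congr_fun (measurableSet_pathCylinder n c) fun x hx => hf x c hx,
    setIntegral_const, smul_eq_mul]

theorem pathCylinder_eq_iUnion_update (n : ℕ) (c : EulerPath) :
    pathCylinder n c = ⋃ j : Fin (n + 2), pathCylinder (n + 1) (Function.update c n j) := by
  ext x
  simp only [pathCylinder, Set.mem_iUnion, Set.mem_ofPred_eq]
  constructor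
  · intro hx
    refine ⟨x n, fun i hi => ?_⟩
    rcases Nat.lt_succ_iff_lt_or_eq.mp hi with hi | rfl
    · rw [Function.update_of_ne hi.ne]; exact hx i hi
    · rw [Function.update_self]
  · rintro ⟨j, hx⟩ i hi
    rw [hx i (by omega), Function.update_of_ne hi.ne]

theorem pairwise_disjoint_pathCylinder_update (n : ℕ) (c : EulerPath) :
    Pairwise (Function.onFun Disjoint fun j : Fin (n + 2) =>
      pathCylinder (n + 1) (Function.update c n j)) := by
  intro j j' hne
  refine Set.disjoint_left.mpr fun x hx hx' => hne ?_
  simpa using (hx n n.lt_succ_self).symm.trans (hx' n n.lt_succ_self)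

theorem sum_fin_ite_le {m k : ℕ} (hk : k < m) :
    ∑ j : Fin m, (if (j : ℕ) ≤ k then (-1 : ℝ) else 1) = m - 2 * (k + 1) := by
  rw [Fin.sum_univ_eq_sum_range (fun j => if j ≤ k then (-1 : ℝ) else 1), Finset.sum_ite]
  have hle : (Finset.range m).filter (· ≤ k) = Finset.range (k + 1) := by
    ext i; simp only [Finset.mem_filter, Finset.mem_range]; omega
  have hgt : ((Finset.range m).filter fun i => ¬ i ≤ k) = Finset.Ico (k + 1) m := by
    ext i; simp only [Finset.mem_filter, Finset.mem_range, Finset.mem_Ico]; omega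
  simp only [hle, hgt, Finset.sum_const, Finset.card_range, Nat.card_Ico, nsmul_eq_mul,
    Nat.cast_sub hk]
  push_cast
  ring

theorem sum_u_succ_update (n : ℕ) (c : EulerPath) :
    ∑ j : Fin (n + 2), u (n + 1) (Function.update c n j) = (n + 1) * u n c := by
  have hbelow : ∀ j : Fin (n + 2), ∀ i < n, Function.update c n j i = c i :=
    fun j i hi => Function.update_of_ne hi.ne _ _
  simp only [u_succ, u_congr (hbelow _), kv_congr (hbelow _), Function.update_self]
  rw [Finset.sum_add_distrib, sum_fin_ite_le (by have := kv_le c n; omega)]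
  simp only [Finset.sum_const, Finset.card_univ, Fintype.card_fin, nsmul_eq_mul, u]
  push_cast
  ring

theorem setIntegral_pathCylinder_u_succ {η : Measure EulerPath} (hη : IsSymmetricMeasure η)
    (n : ℕ) (c : EulerPath) :
    ∫ x in pathCylinder n c, u (n + 1) x ∂η =
      ∫ x in pathCylinder n c, ((n : ℝ) + 1) / ((n : ℝ) + 2) * u n x ∂η := by
  have : IsProbabilityMeasure η := hη.1
  calc ∫ x in pathCylinder n c, u (n + 1) x ∂η
      = ∑ j : Fin (n + 2),
          ∫ x in pathCylinder (n + 1) (Function.update c n j), u (n + 1) x ∂η := by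
        rw [pathCylinder_eq_iUnion_update,
          integral_iUnion (fun j => measurableSet_pathCylinder _ _)
            (pairwise_disjoint_pathCylinder_update n c) (integrable_u η (n + 1)).integrableOn,
          tsum_fintype]
    _ = ∑ j : Fin (n + 2),
          η.real (pathCylinder n c) * ((n : ℝ) + 2)⁻¹ *
            u (n + 1) (Function.update c n j) := by
        refine Finset.sum_congr rfl fun j _ => ?_
        rw [setIntegral_pathCylinder_of_prefix η (fun _ _ => u_congr),
          measureReal_pathCylinder_succ hη,
          pathCylinder_congr fun i hi => Function.update_of_ne hi.ne _ _]
    _ = η.real (pathCylinder n c) * (((n : ℝ) + 1) / ((n : ℝ) + 2) * u n c) := by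
        rw [← Finset.mul_sum, sum_u_succ_update]
        ring
    _ = ∫ x in pathCylinder n c, ((n : ℝ) + 1) / ((n : ℝ) + 2) * u n x ∂η :=
        (setIntegral_pathCylinder_of_prefix η
          (f := fun x => ((n : ℝ) + 1) / ((n : ℝ) + 2) * u n x)
          (fun _ _ h => by rw [u_congr h]) c).symm

/-- `η`-almost everywhere, `E_η[u_{n+1} | F_n] = ((n+1)/(n+2)) · u_n`. -/
theorem euler_u_condexp
    (η : Measure EulerPath) (hη : IsSymmetricMeasure η) (n : ℕ) :
    MeasureTheory.condExp (coordAlg n) η (u (n + 1)) =ᵐ[η]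
      fun x => (((n : ℝ) + 1) / ((n : ℝ) + 2)) * u n x := by
  have : IsProbabilityMeasure η := hη.1
  have hmeas : StronglyMeasurable[coordAlg n] fun x => ((n : ℝ) + 1) / ((n : ℝ) + 2) * u n x :=
    ((measurable_u n).const_mul _).stronglyMeasurable
  rw [coordAlg_eq_comap_prefixProj] at hmeas ⊢
  refine condExp_comap_ae_eq_of_setIntegral_fiber_eq (measurable_prefixProj n)
    (integrable_u η (n + 1)) ((integrable_u η n).const_mul _) hmeas fun c => ?_
  rw [preimage_prefixProj_singleton]
  exact (setIntegral_pathCylinder_u_succ hη n c).symm
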